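/- arXiv:1802.08811 — 2 statements merged into one kernel-verified Lean document; each statement's English description precedes it below -/
import Mathlib

section
/- Let m ≥ 2, n ≥ 3, and let k be a unit modulo n of multiplicative order α with k^m ≡ 1 (mod n). Assume α is even, k^{α/2} ≡ −1 (mod n), and 2·deg(n,k;α) ≤ ⌊α/2⌋. Then diam(G_{m,n,k}) ≤ ⌊m/2⌋ + wt(n, k; α). -/
/-- The set `Ω(i, λ) = { b₁k^{i₁} + ⋯ + b_r k^{i_r} mod n : |b_j| ≤ λ_j }` in `ℤ/nℤ`. -/
def OmegaSet (n : ℕ) (k : (ZMod n)ˣ) {r : ℕ} (i : Fin r → ℕ) (lam : Fin r → ℕ) :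
    Set (ZMod n) :=
  { x | ∃ b : Fin r → ℤ, (∀ j, |b j| ≤ (lam j : ℤ)) ∧
      x = ∑ j, (b j : ZMod n) * ((k ^ i j : (ZMod n)ˣ) : ZMod n) }

/-- A `sequence`: a strictly decreasing tuple `α−1 ≥ i₁ > i₂ > ⋯ > i_r ≥ 0`. -/
def IsSeq (α : ℕ) {r : ℕ} (i : Fin r → ℕ) : Prop :=
  (∀ j, i j ≤ α - 1) ∧ StrictAnti i

/-- `wt(n, k; i)`: the minimal total weight `λ₁ + ⋯ + λ_r` over tuples `λ`
with `Ω(i,λ) = ℤ/nℤ`. -/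
noncomputable def wtSeq (n : ℕ) (k : (ZMod n)ˣ) {r : ℕ} (i : Fin r → ℕ) : ℕ :=
  sInf { s | ∃ lam : Fin r → ℕ, OmegaSet n k i lam = Set.univ ∧ ∑ j, lam j = s }

/-- The maximal sequence `Δ : α−1 > α−2 > ⋯ > 1 > 0`. -/
def DeltaSeq (α : ℕ) : Fin α → ℕ := fun j => α - 1 - (j : ℕ)

/-- `wt(n, k; α) := wt(n, k; Δ)`. -/
noncomputable def wtAlpha (n : ℕ) (k : (ZMod n)ˣ) (α : ℕ) : ℕ :=
  wtSeq n k (DeltaSeq α)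

/-- The degree of a sequence: its largest entry. -/
noncomputable def degSeq {r : ℕ} (i : Fin r → ℕ) : ℕ := sSup (Set.range i)

/-- The codegree of a sequence: its smallest nonzero entry. -/
noncomputable def codegSeq {r : ℕ} (i : Fin r → ℕ) : ℕ :=
  sInf { v | v ∈ Set.range i ∧ v ≠ 0 }

/-- A minimal prime sequence realizing `wt(n,k;α)`: a reduced sequence (i.e. one
containing `0`) of weight `wt(n,k;α)` such that no proper reduced subsequence
has weight `wt(n,k;α)`. -/
def IsMinimalPrimeSeq (n : ℕ) (k : (ZMod n)ˣ) (α : ℕ) {r : ℕ} (i : Fin r → ℕ) : Prop :=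
  IsSeq α i ∧ 0 ∈ Set.range i ∧ wtSeq n k i = wtAlpha n k α ∧
    ∀ (q : ℕ) (i₀ : Fin q → ℕ), IsSeq α i₀ → 0 ∈ Set.range i₀ →
      Set.range i₀ ⊆ Set.range i → Set.range i₀ ≠ Set.range i →
      wtSeq n k i₀ ≠ wtAlpha n k α

/-- `deg(n,k;α)`: the smallest degree of a minimal prime sequence realizing `wt(n,k;α)`. -/
noncomputable def degNK (n : ℕ) (k : (ZMod n)ˣ) (α : ℕ) : ℕ :=
  sInf { d | ∃ (r : ℕ) (i : Fin r → ℕ), IsMinimalPrimeSeq n k α i ∧ degSeq i = d }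
/-- Relators of the split metacyclic group `⟨x, y | x^m = y^n = 1, x⁻¹yx = y^k⟩`,
with generator `0` playing the role of `x` and `1` that of `y`. -/
def metacyclicRels (m n k : ℕ) : Set (FreeGroup (Fin 2)) :=
  { FreeGroup.of 0 ^ m, FreeGroup.of 1 ^ n,
    (FreeGroup.of 0)⁻¹ * FreeGroup.of 1 * FreeGroup.of 0 * (FreeGroup.of 1 ^ k)⁻¹ }

/-- The split metacyclic group `G_{m,n,k} = ℤ_m ⋉_k ℤ_n
  = ⟨x, y | x^m = y^n = 1, x⁻¹yx = y^k⟩`. -/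
abbrev SplitMetacyclic (m n k : ℕ) : Type := PresentedGroup (metacyclicRels m n k)

/-- The generator `x` of `G_{m,n,k}`. -/
def xgen (m n k : ℕ) : SplitMetacyclic m n k := PresentedGroup.of 0

/-- The generator `y` of `G_{m,n,k}`. -/
def ygen (m n k : ℕ) : SplitMetacyclic m n k := PresentedGroup.of 1

/-- The word norm of `g` with respect to a set `S` of generators:
the least `t` such that `g` is a product of `t` elements of `S`. -/
noncomputable def wordNorm {G : Type*} [Group G] (S : Set G) (g : G) : ℕ :=
  sInf { t | ∃ w : List G, (∀ u ∈ w, u ∈ S) ∧ w.length = t ∧ w.prod = g }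

/-- The diameter of a group with respect to a set `S` of generators. -/
noncomputable def diam {G : Type*} [Group G] (S : Set G) : ℕ :=
  ⨆ g : G, wordNorm S g

/-- The generating set `{x, x⁻¹, y, y⁻¹}` of `G_{m,n,k}`. -/
def genSet (m n k : ℕ) : Set (SplitMetacyclic m n k) :=
  {xgen m n k, (xgen m n k)⁻¹, ygen m n k, (ygen m n k)⁻¹}

/-!
Write `g ∈ G_{m,n,k}` as `x^e y^b` with `0 ≤ e < m`; replacing `g` by `g⁻¹` if necessary we may
assume `e ≤ ⌊m/2⌋`. Take a minimal prime sequence `i₁ > ⋯ > i_r` of degree `d = deg(n,k;α)` and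
write `b ≡ Σ c_j k^{i_j}` with `Σ |c_j| ≤ wt(n,k;α)`. Since `y^{c k^i} = x^{-i} y^c x^i`, the
product telescopes to `x^{e-i₁} y^{c₁} x^{i₁-i₂} y^{c₂} ⋯ y^{c_r} x^{i_r}`, whose `x`-part has
length `|e - d| + d ≤ max(e, 2d) ≤ ⌊m/2⌋`, because `2d ≤ ⌊α/2⌋` and `α ∣ m`.
-/

section WordLength

variable {G : Type*} [Group G] {S : Set G}

-- `wordNorm S g` is an `sInf`, a junk `0` when `g` is no product of elements of `S`;
-- upper bounds on it are therefore proved through explicit words.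
def WordLengthLE (S : Set G) (g : G) (t : ℕ) : Prop :=
  ∃ w : List G, (∀ u ∈ w, u ∈ S) ∧ w.length ≤ t ∧ w.prod = g

theorem WordLengthLE.mono {g : G} {s t : ℕ} (h : WordLengthLE S g s) (hst : s ≤ t) :
    WordLengthLE S g t := by
  obtain ⟨w, hwS, hlen, hprod⟩ := h
  exact ⟨w, hwS, hlen.trans hst, hprod⟩

theorem WordLengthLE.mul {g h : G} {s t : ℕ} (hg : WordLengthLE S g s)
    (hh : WordLengthLE S h t) : WordLengthLE S (g * h) (s + t) := by
  obtain ⟨v, hvS, hvlen, rfl⟩ := hg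
  obtain ⟨w, hwS, hwlen, rfl⟩ := hh
  refine ⟨v ++ w, fun u hu => ?_, by simpa using Nat.add_le_add hvlen hwlen, List.prod_append⟩
  rcases List.mem_append.1 hu with hu | hu
  exacts [hvS u hu, hwS u hu]

theorem WordLengthLE.inv (hS : ∀ u ∈ S, u⁻¹ ∈ S) {g : G} {t : ℕ} (h : WordLengthLE S g t) :
    WordLengthLE S g⁻¹ t := by
  obtain ⟨w, hwS, hlen, rfl⟩ := h
  refine ⟨(w.map Inv.inv).reverse, ?_, by simpa using hlen, (List.prod_inv_reverse w).symm⟩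
  simp only [List.mem_reverse, List.mem_map, forall_exists_index, and_imp]
  rintro _ u hu rfl
  exact hS u (hwS u hu)

theorem wordLengthLE_pow {x : G} (hx : x ∈ S) (c : ℕ) : WordLengthLE S (x ^ c) c :=
  ⟨List.replicate c x, fun _ hu => List.eq_of_mem_replicate hu ▸ hx, by simp, by simp⟩

theorem wordLengthLE_zpow {x : G} (hx : x ∈ S) (hx' : x⁻¹ ∈ S) (c : ℤ) :
    WordLengthLE S (x ^ c) c.natAbs := by
  obtain ⟨c, rfl | rfl⟩ := Int.eq_nat_or_neg c
  · simpa using wordLengthLE_pow hx c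
  · simpa [← inv_pow] using wordLengthLE_pow hx' c

theorem wordNorm_le_of_wordLengthLE {g : G} {t : ℕ} (h : WordLengthLE S g t) :
    wordNorm S g ≤ t := by
  obtain ⟨w, hwS, hlen, hprod⟩ := h
  exact (Nat.sInf_le ⟨w, hwS, rfl, hprod⟩ : wordNorm S g ≤ w.length).trans hlen

theorem diam_le_of_forall_wordLengthLE {t : ℕ} (h : ∀ g, WordLengthLE S g t) : diam S ≤ t :=
  ciSup_le fun g => wordNorm_le_of_wordLengthLE (h g)

end WordLength

section Conjugation

variable {G : Type*} [Group G] {x y : G} {k : ℕ}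

theorem inv_mul_zpow_mul_eq (hconj : x⁻¹ * y * x = y ^ k) (c : ℤ) :
    x⁻¹ * y ^ c * x = y ^ (c * k) := by
  rw [mul_comm, zpow_mul, zpow_natCast, ← hconj]
  simpa using (conj_zpow (a := x⁻¹) (b := y) (i := c)).symm

theorem zpow_mul_pow_eq (hconj : x⁻¹ * y * x = y ^ k) (c : ℤ) (j : ℕ) :
    y ^ c * x ^ j = x ^ j * y ^ (c * k ^ j) := by
  induction j generalizing c with
  | zero => simp
  | succ j ih =>
    rw [pow_succ, ← mul_assoc, ih, pow_succ (k : ℤ), ← mul_assoc c, ← inv_mul_zpow_mul_eq hconj]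
    group

end Conjugation

section Telescoping

variable {G : Type*} [Group G] {S : Set G} {x y : G} {k : ℕ}

theorem wordLengthLE_pow_mul_zpow_sum (hx : x ∈ S) (hx' : x⁻¹ ∈ S) (hy : y ∈ S)
    (hy' : y⁻¹ ∈ S) (hconj : x⁻¹ * y * x = y ^ k) {r : ℕ} (i : Fin r → ℕ) (hi : Antitone i)
    (c : Fin r → ℤ) {d : ℕ} (hd : ∀ j, i j ≤ d) (e : ℕ) :
    WordLengthLE S (x ^ e * y ^ (∑ j, c j * (k : ℤ) ^ i j))
      (Nat.dist e d + d + ∑ j, (c j).natAbs) := by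
  induction r generalizing e d with
  | zero => simpa using (wordLengthLE_pow hx e).mono (by unfold Nat.dist; omega)
  | succ r ih =>
    have htail := ih (i ∘ Fin.succ) (hi.comp_monotone (Fin.strictMono_succ.monotone))
      (c ∘ Fin.succ) (fun j => hi (Fin.zero_le j.succ)) (i 0)
    have hsplit : x ^ e * y ^ (∑ j, c j * (k : ℤ) ^ i j) = x ^ ((e : ℤ) - i 0) * y ^ c 0 *
        (x ^ i 0 * y ^ (∑ j : Fin r, c j.succ * (k : ℤ) ^ i j.succ)) := by
      simp only [Fin.sum_univ_succ, zpow_add, mul_assoc]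
      rw [← mul_assoc (y ^ c 0), zpow_mul_pow_eq hconj, zpow_sub, zpow_natCast, zpow_natCast]
      group
    rw [hsplit]
    refine (((wordLengthLE_zpow hx hx' _).mul (wordLengthLE_zpow hy hy' (c 0))).mul htail).mono ?_
    simp only [Fin.sum_univ_succ, Function.comp_apply, Nat.dist_self, zero_add]
    have := hd 0
    unfold Nat.dist
    omega

end Telescoping

section OmegaSet

variable {G : Type*} [Group G] {n k r : ℕ} {u : (ZMod n)ˣ} {i lam : Fin r → ℕ}

theorem exists_zpow_eq_zpow_sum_of_mem_omegaSet {y : G} (hyn : y ^ n = 1)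
    (hu : (u : ZMod n) = k) {b : ℤ} (hb : (b : ZMod n) ∈ OmegaSet n u i lam) :
    ∃ c : Fin r → ℤ, y ^ b = y ^ (∑ j, c j * (k : ℤ) ^ i j) ∧
      ∑ j, (c j).natAbs ≤ ∑ j, lam j := by
  obtain ⟨c, hc, hbc⟩ := hb
  refine ⟨c, ?_, Finset.sum_le_sum fun j _ => ?_⟩
  · rw [zpow_eq_zpow_iff_modEq]
    refine Int.ModEq.of_dvd (Int.natCast_dvd_natCast.2 (orderOf_dvd_of_pow_eq_one hyn)) ?_
    rw [← ZMod.intCast_eq_intCast_iff, hbc]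
    push_cast
    simp [hu]
  · have := hc j
    rw [Int.abs_eq_natAbs] at this
    exact_mod_cast this

theorem wordLengthLE_pow_mul_zpow_of_mem_omegaSet {S : Set G} {x y : G} (hx : x ∈ S)
    (hx' : x⁻¹ ∈ S) (hy : y ∈ S) (hy' : y⁻¹ ∈ S) (hconj : x⁻¹ * y * x = y ^ k)
    (hyn : y ^ n = 1) (hu : (u : ZMod n) = k) (hi : Antitone i) {d : ℕ} (hd : ∀ j, i j ≤ d)
    {b : ℤ} (hb : (b : ZMod n) ∈ OmegaSet n u i lam) (e : ℕ) :
    WordLengthLE S (x ^ e * y ^ b) (Nat.dist e d + d + ∑ j, lam j) := by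
  obtain ⟨c, hyb, hc⟩ := exists_zpow_eq_zpow_sum_of_mem_omegaSet hyn hu hb
  rw [hyb]
  exact (wordLengthLE_pow_mul_zpow_sum hx hx' hy hy' hconj i hi c hd e).mono (by omega)

end OmegaSet

namespace SplitMetacyclic

variable (m n k : ℕ)

theorem xgen_pow_eq_one : xgen m n k ^ m = 1 := by
  simpa [xgen, PresentedGroup.of] using
    PresentedGroup.one_of_mem (rels := metacyclicRels m n k) (Or.inl rfl)

theorem ygen_pow_eq_one : ygen m n k ^ n = 1 := by
  simpa [ygen, PresentedGroup.of] using
    PresentedGroup.one_of_mem (rels := metacyclicRels m n k) (Or.inr (Or.inl rfl))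

theorem inv_xgen_mul_ygen_mul_xgen : (xgen m n k)⁻¹ * ygen m n k * xgen m n k = ygen m n k ^ k :=
  eq_of_mul_inv_eq_one <| by
    simpa [xgen, ygen, PresentedGroup.of] using
      PresentedGroup.one_of_mem (rels := metacyclicRels m n k) (Or.inr (Or.inr rfl))

theorem xgen_mem_genSet : xgen m n k ∈ genSet m n k := by simp [genSet]
theorem inv_xgen_mem_genSet : (xgen m n k)⁻¹ ∈ genSet m n k := by simp [genSet]
theorem ygen_mem_genSet : ygen m n k ∈ genSet m n k := by simp [genSet]
theorem inv_ygen_mem_genSet : (ygen m n k)⁻¹ ∈ genSet m n k := by simp [genSet]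

theorem inv_mem_genSet {g : SplitMetacyclic m n k} (hg : g ∈ genSet m n k) :
    g⁻¹ ∈ genSet m n k := by
  rcases hg with rfl | rfl | rfl | rfl <;> simp [genSet]

local notation "x" => xgen m n k
local notation "y" => ygen m n k

theorem xgen_pow_mul_ygen_zpow_mul_xgen_pow (a j : ℕ) (b : ℤ) :
    x ^ a * y ^ b * x ^ j = x ^ (a + j) * y ^ (b * (k : ℤ) ^ j) := by
  rw [mul_assoc, zpow_mul_pow_eq (inv_xgen_mul_ygen_mul_xgen m n k), pow_add, mul_assoc]

variable {m n k}

theorem exists_eq_xgen_pow_mul_ygen_zpow (hm : 0 < m) (g : SplitMetacyclic m n k) :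
    ∃ e < m, ∃ b : ℤ, g = x ^ e * y ^ b := by
  have hxinv : x⁻¹ = x ^ (m - 1) :=
    inv_eq_of_mul_eq_one_right <| by rw [← pow_succ', Nat.sub_add_cancel hm, xgen_pow_eq_one]
  suffices ∃ a : ℕ, ∃ b : ℤ, g = x ^ a * y ^ b by
    obtain ⟨a, b, rfl⟩ := this
    exact ⟨a % m, Nat.mod_lt a hm, b, by rw [← pow_eq_pow_mod a (xgen_pow_eq_one m n k)]⟩
  have hg : g ∈ Subgroup.closure (Set.range PresentedGroup.of) := by
    rw [PresentedGroup.closure_range_of]; trivial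
  induction hg using Subgroup.closure_induction_right with
  | one => exact ⟨0, 0, by simp⟩
  | mul_right _ _ _ hs ih =>
    obtain ⟨j, rfl⟩ := hs
    obtain ⟨a, b, rfl⟩ := ih
    fin_cases j
    · refine ⟨a + 1, b * k, ?_⟩
      change x ^ a * y ^ b * x = _
      simpa using xgen_pow_mul_ygen_zpow_mul_xgen_pow m n k a 1 b
    · exact ⟨a, b + 1, by simp [ygen, zpow_add, mul_assoc]⟩
  | mul_inv_cancel _ _ _ hs ih =>
    obtain ⟨j, rfl⟩ := hs
    obtain ⟨a, b, rfl⟩ := ih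
    fin_cases j
    · refine ⟨a + (m - 1), b * (k : ℤ) ^ (m - 1), ?_⟩
      change x ^ a * y ^ b * x⁻¹ = _
      rw [hxinv, xgen_pow_mul_ygen_zpow_mul_xgen_pow]
    · exact ⟨a, b - 1, by simp [ygen, zpow_sub, mul_assoc]⟩

theorem inv_xgen_pow_mul_ygen_zpow {e : ℕ} (he : e ≤ m) (b : ℤ) :
    (x ^ e * y ^ b)⁻¹ = x ^ (m - e) * y ^ (-b * (k : ℤ) ^ (m - e)) := by
  refine inv_eq_of_mul_eq_one_right ?_
  rw [← zpow_mul_pow_eq (inv_xgen_mul_ygen_mul_xgen m n k), mul_assoc, ← mul_assoc (y ^ b),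
    ← zpow_add, add_neg_cancel, zpow_zero, one_mul, ← pow_add, Nat.add_sub_cancel' he,
    xgen_pow_eq_one]

theorem wordLengthLE_of_forall_le_half (hm : 0 < m) {t : ℕ}
    (h : ∀ e ≤ m / 2, ∀ b : ℤ, WordLengthLE (genSet m n k) (x ^ e * y ^ b) t)
    (g : SplitMetacyclic m n k) : WordLengthLE (genSet m n k) g t := by
  obtain ⟨e, hem, b, rfl⟩ := exists_eq_xgen_pow_mul_ygen_zpow hm g
  by_cases he : e ≤ m / 2
  · exact h e he b
  · rw [← inv_inv (x ^ e * y ^ b), inv_xgen_pow_mul_ygen_zpow hem.le]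
    exact (h (m - e) (by omega) _).inv fun _ => inv_mem_genSet m n k

end SplitMetacyclic

section Sequences

variable {n : ℕ} (k : (ZMod n)ˣ) {α : ℕ}

theorem exists_omegaSet_eq_univ_sum_eq_wtSeq [NeZero n] {r : ℕ} (i : Fin r → ℕ) (j₀ : Fin r) :
    ∃ lam : Fin r → ℕ, OmegaSet n k i lam = Set.univ ∧ ∑ j, lam j = wtSeq n k i := by
  refine Nat.sInf_mem (s := {s | ∃ lam, OmegaSet n k i lam = Set.univ ∧ ∑ j, lam j = s})
    ⟨n, Pi.single j₀ n, Set.eq_univ_of_forall fun z => ?_, by simp⟩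
  let w : ZMod n := z * ↑(k ^ i j₀)⁻¹
  refine ⟨Pi.single j₀ (w.val : ℤ), fun j => ?_, ?_⟩
  · rcases eq_or_ne j j₀ with rfl | hj
    · rw [Pi.single_eq_same, Pi.single_eq_same, abs_of_nonneg (Int.natCast_nonneg _)]
      exact_mod_cast (ZMod.val_lt w).le
    · simp [hj]
  · rw [Fintype.sum_eq_single j₀ fun j hj => by simp [hj], Pi.single_eq_same, Int.cast_natCast,
      ZMod.natCast_zmod_val, Units.inv_mul_cancel_right]

theorem exists_isMinimalPrimeSeq_of_wtSeq_eq {r : ℕ} (i : Fin r → ℕ) (hi : IsSeq α i)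
    (h0 : 0 ∈ Set.range i) (hwt : wtSeq n k i = wtAlpha n k α) :
    ∃ (q : ℕ) (i₀ : Fin q → ℕ), IsMinimalPrimeSeq n k α i₀ := by
  induction r using Nat.strong_induction_on with
  | _ r ih =>
    by_cases hmin : IsMinimalPrimeSeq n k α i
    · exact ⟨r, i, hmin⟩
    obtain ⟨q, i₀, hi₀, h0₀, hsub, hne, hwt₀⟩ : ∃ (q : ℕ) (i₀ : Fin q → ℕ), IsSeq α i₀ ∧
        0 ∈ Set.range i₀ ∧ Set.range i₀ ⊆ Set.range i ∧ Set.range i₀ ≠ Set.range i ∧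
        wtSeq n k i₀ = wtAlpha n k α := by
      simpa [IsMinimalPrimeSeq, hi, h0, hwt] using hmin
    have hqr : q < r := by
      simpa [Set.ncard_range_of_injective hi₀.2.injective,
        Set.ncard_range_of_injective hi.2.injective] using
        Set.ncard_lt_ncard (hsub.ssubset_of_ne hne) (Set.finite_range i)
    exact ih q hqr i₀ hi₀ h0₀ hwt₀

theorem exists_isMinimalPrimeSeq_degSeq_eq_degNK (hα : 0 < α) :
    ∃ (r : ℕ) (i : Fin r → ℕ), IsMinimalPrimeSeq n k α i ∧ degSeq i = degNK n k α := by
  have hΔ : IsSeq α (DeltaSeq α) := ⟨fun j => Nat.sub_le _ _, fun j j' h => by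
    simp only [DeltaSeq]; omega⟩
  obtain ⟨r, i, hi⟩ := exists_isMinimalPrimeSeq_of_wtSeq_eq k (DeltaSeq α) hΔ
    ⟨⟨α - 1, by omega⟩, by simp [DeltaSeq]⟩ rfl
  exact Nat.sInf_mem
    (s := {d | ∃ (r : ℕ) (i : Fin r → ℕ), IsMinimalPrimeSeq n k α i ∧ degSeq i = d})
    ⟨degSeq i, r, i, hi, rfl⟩

theorem le_degSeq {r : ℕ} (i : Fin r → ℕ) (j : Fin r) : i j ≤ degSeq i :=
  le_csSup (Set.finite_range i).bddAbove ⟨j, rfl⟩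

end Sequences

theorem ZMod.unitOfCoprime_pow_eq_one {n k m : ℕ} (hk : k.Coprime n) (hkm : k ^ m ≡ 1 [MOD n]) :
    ZMod.unitOfCoprime k hk ^ m = 1 :=
  Units.ext <| by simpa using (ZMod.natCast_eq_natCast_iff _ _ _).2 hkm

open SplitMetacyclic in
theorem diam_split_metacyclic_bound_of_small_deg_general (m n k : ℕ) (hm : 2 ≤ m)
    (hn : 3 ≤ n) (hk : Nat.Coprime k n) (hkm : k ^ m ≡ 1 [MOD n]) (α : ℕ)
    (hα : orderOf (ZMod.unitOfCoprime k hk) = α)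
    (hdeg : 2 * degNK n (ZMod.unitOfCoprime k hk) α ≤ α / 2) :
    diam (genSet m n k) ≤ m / 2 + wtAlpha n (ZMod.unitOfCoprime k hk) α := by
  have : NeZero n := ⟨by omega⟩
  set u := ZMod.unitOfCoprime k hk
  have hαm : α / 2 ≤ m / 2 := Nat.div_le_div_right <| Nat.le_of_dvd (by omega) <|
    hα ▸ orderOf_dvd_of_pow_eq_one (ZMod.unitOfCoprime_pow_eq_one hk hkm)
  obtain ⟨r, i, ⟨⟨-, hi⟩, ⟨j₀, -⟩, hwt, -⟩, hdeg_i⟩ :=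
    exists_isMinimalPrimeSeq_degSeq_eq_degNK u (hα ▸ orderOf_pos u)
  obtain ⟨lam, hΩ, hlam⟩ := exists_omegaSet_eq_univ_sum_eq_wtSeq u i j₀
  refine diam_le_of_forall_wordLengthLE <|
    wordLengthLE_of_forall_le_half (by omega) fun e he b => ?_
  refine (wordLengthLE_pow_mul_zpow_of_mem_omegaSet (xgen_mem_genSet m n k)
    (inv_xgen_mem_genSet m n k) (ygen_mem_genSet m n k) (inv_ygen_mem_genSet m n k)
    (inv_xgen_mul_ygen_mul_xgen m n k) (ygen_pow_eq_one m n k) (ZMod.coe_unitOfCoprime k hk)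
    hi.antitone (le_degSeq i) (hΩ ▸ Set.mem_univ (b : ZMod n)) e).mono ?_
  rw [hlam, hwt, hdeg_i]
  unfold Nat.dist
  omega

/-- If `α = ord(k)` is even, `k^{α/2} ≡ −1 (mod n)` and
`2·deg(n,k;α) ≤ ⌊α/2⌋`, then `diam(G_{m,n,k}) ≤ ⌊m/2⌋ + wt(n,k;α)`. -/
theorem diam_split_metacyclic_bound_of_small_deg (m n k : ℕ) (hm : 2 ≤ m)
    (hn : 3 ≤ n) (hk : Nat.Coprime k n) (hkm : k ^ m ≡ 1 [MOD n]) (α : ℕ)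
    (hα : orderOf (ZMod.unitOfCoprime k hk) = α) (heven : Even α)
    (hneg : ZMod.unitOfCoprime k hk ^ (α / 2) = (-1 : (ZMod n)ˣ))
    (hdeg : 2 * degNK n (ZMod.unitOfCoprime k hk) α ≤ α / 2) :
    diam (genSet m n k) ≤ m / 2 + wtAlpha n (ZMod.unitOfCoprime k hk) α :=
  diam_split_metacyclic_bound_of_small_deg_general m n k hm hn hk hkm α hα hdeg
end

section
/- Let n ≥ 3 and let k, k′ be units modulo n that generate the same cyclic subgroup of (ℤ/nℤ)ˣ (so both have the same multiplicative order α ≥ 2). Then wt(n, k; α) = wt(n, k′; α). -/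
section Aux

variable {G : Type*} [Group G]

lemma pow_delta_injective {k : G} {α : ℕ} (hα : 1 ≤ α) (hk : orderOf k = α) :
    Function.Injective (fun j : Fin α => k ^ DeltaSeq α j) := by
  intro j1 j2 h
  simp only [pow_eq_pow_iff_modEq, hk] at h
  have h1 := j1.isLt
  have h2 := j2.isLt
  have d1 : DeltaSeq α j1 < α := by simp only [DeltaSeq]; omega
  have d2 : DeltaSeq α j2 < α := by simp only [DeltaSeq]; omega
  have heq : DeltaSeq α j1 = DeltaSeq α j2 := h.eq_of_lt_of_lt d1 d2
  simp only [DeltaSeq] at heq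
  exact Fin.ext (by omega)

lemma range_pow_delta {k : G} {α : ℕ} (hα : 1 ≤ α) (hk : orderOf k = α) :
    Set.range (fun j : Fin α => k ^ DeltaSeq α j) = (Subgroup.zpowers k : Set G) := by
  ext x
  constructor
  · rintro ⟨j, rfl⟩
    exact ⟨(DeltaSeq α j : ℤ), by simp⟩
  · rintro ⟨z, rfl⟩
    have hz : k ^ z = k ^ (z % (α : ℤ)) := by
      rw [← hk, zpow_mod_orderOf]
    have hnn : 0 ≤ z % (α : ℤ) := Int.emod_nonneg z (by exact_mod_cast by omega)
    have hlt : z % (α : ℤ) < (α : ℤ) := Int.emod_lt_of_pos z (by exact_mod_cast hα)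
    set m : ℕ := (z % (α : ℤ)).toNat with hm
    have hmlt : m < α := by omega
    refine ⟨⟨α - 1 - m, by omega⟩, ?_⟩
    have hd : DeltaSeq α ⟨α - 1 - m, by omega⟩ = m := by
      simp only [DeltaSeq]; omega
    show k ^ DeltaSeq α (⟨α - 1 - m, by omega⟩ : Fin α) = k ^ z
    rw [hd]
    rw [hz, ← zpow_natCast]
    congr 1
    omega

/-- If two injective maps have the same range, one is the other composed with a permutation. -/
lemma exists_perm_of_range_eq {ι X : Type*} {f g : ι → X}
    (hf : Function.Injective f) (hg : Function.Injective g)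
    (hr : Set.range f = Set.range g) :
    ∃ σ : ι ≃ ι, ∀ j, f j = g (σ j) := by
  refine ⟨(Equiv.ofInjective f hf).trans ((Equiv.setCongr hr).trans
    (Equiv.ofInjective g hg).symm), fun j => ?_⟩
  have : g ((Equiv.ofInjective g hg).symm ⟨f j, hr ▸ Set.mem_range_self j⟩) =
      (⟨f j, hr ▸ Set.mem_range_self j⟩ : Set.range g).val := by
    exact congrArg Subtype.val ((Equiv.ofInjective g hg).apply_symm_apply _)
  simp [Equiv.trans_apply, Equiv.setCongr]
  exact (congrArg Subtype.val ((Equiv.ofInjective g hg).apply_symm_apply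
    ⟨f j, hr ▸ Set.mem_range_self j⟩)).symm

end Aux

lemma wt_mem_trans (n : ℕ) (hn : 3 ≤ n) (α : ℕ) (hα2 : 2 ≤ α) (k k' : (ZMod n)ˣ)
    (hgen : Subgroup.zpowers k = Subgroup.zpowers k')
    (hk : orderOf k = α) (hk' : orderOf k' = α) (lam : Fin α → ℕ)
    (h : OmegaSet n k' (DeltaSeq α) lam = Set.univ) :
    ∃ lam' : Fin α → ℕ, OmegaSet n k (DeltaSeq α) lam' = Set.univ ∧
      ∑ j, lam' j = ∑ j, lam j := by
  have hα1 : 1 ≤ α := by omega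
  have hf : Function.Injective (fun j : Fin α => k' ^ DeltaSeq α j) :=
    pow_delta_injective hα1 hk'
  have hg : Function.Injective (fun j : Fin α => k ^ DeltaSeq α j) :=
    pow_delta_injective hα1 hk
  have hr : Set.range (fun j : Fin α => k' ^ DeltaSeq α j) =
      Set.range (fun j : Fin α => k ^ DeltaSeq α j) := by
    rw [range_pow_delta hα1 hk', range_pow_delta hα1 hk, hgen]
  obtain ⟨σ, hσ⟩ := exists_perm_of_range_eq hf hg hr
  refine ⟨lam ∘ σ.symm, ?_, ?_⟩
  · apply Set.eq_univ_of_forall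
    intro x
    have hx : x ∈ OmegaSet n k' (DeltaSeq α) lam := h ▸ Set.mem_univ x
    obtain ⟨b, hb, hbx⟩ := hx
    refine ⟨b ∘ σ.symm, fun j => hb _, ?_⟩
    rw [hbx]
    refine Fintype.sum_equiv σ _ _ (fun j => ?_)
    simp only [Function.comp_apply, Equiv.symm_apply_apply]
    rw [hσ j]
  · exact Fintype.sum_equiv σ.symm _ _ (fun j => rfl)

/-- If units `k` and `k′` modulo `n` generate the same cyclic subgroup of
`(ℤ/nℤ)ˣ` (so they have the same order `α`), then `wt(n,k;α) = wt(n,k′;α)`. -/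
theorem wtAlpha_eq_of_same_zpowers (n : ℕ) (hn : 3 ≤ n) (k k' : (ZMod n)ˣ)
    (hgen : Subgroup.zpowers k = Subgroup.zpowers k') (α : ℕ)
    (hα : orderOf k = α) (hα2 : 2 ≤ α) :
    wtAlpha n k α = wtAlpha n k' α := by
  have hk' : orderOf k' = α := by
    rw [← Nat.card_zpowers, ← hgen, Nat.card_zpowers, hα]
  unfold wtAlpha wtSeq
  congr 1
  ext s
  constructor
  · rintro ⟨lam, hlam, rfl⟩
    obtain ⟨lam', h1, h2⟩ := wt_mem_trans n hn α hα2 k' k hgen.symm hk' hα lam hlam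
    exact ⟨lam', h1, h2⟩
  · rintro ⟨lam, hlam, rfl⟩
    obtain ⟨lam', h1, h2⟩ := wt_mem_trans n hn α hα2 k k' hgen hα hk' lam hlam
    exact ⟨lam', h1, h2⟩
end
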